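/- arXiv:2202.07786 — 9 statements merged into one kernel-verified Lean document; each statement's English description precedes it below -/
import Mathlib

section
/- (Hennessy–Milner) Let (X₁,R₁,v₁) and (X₂,R₂,v₂) be image finite Kripke structures, i.e. R₁(x) is finite for every x ∈ X₁ and R₂(y) is finite for every y ∈ X₂. Then for all x ∈ X₁ and y ∈ X₂: x ∼ y if and only if x ≈ y (x and y are bisimilar iff they are logically equivalent). -/
/-- Modal formulas over a set `Φ` of atomic propositions. -/
inductive ModalFormula (Φ : Type*) : Type _ where
  | atom : Φ → ModalFormula Φ
  | top  : ModalFormula Φ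
  | bot  : ModalFormula Φ
  | neg  : ModalFormula Φ → ModalFormula Φ
  | and  : ModalFormula Φ → ModalFormula Φ → ModalFormula Φ
  | or   : ModalFormula Φ → ModalFormula Φ → ModalFormula Φ
  | box  : ModalFormula Φ → ModalFormula Φ

/-- `◇φ := ¬□¬φ`. -/
def ModalFormula.dia {Φ : Type*} (φ : ModalFormula Φ) : ModalFormula Φ :=
  .neg (.box (.neg φ))

/-- A Kripke structure on state set `X`: a transition relation and a valuation. -/
structure KripkeStructure (Φ X : Type*) where
  R : X → X → Prop
  v : X → Set Φ

/-- Satisfaction `x ⊨ φ`. -/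
def Satisfies {Φ X : Type*} (M : KripkeStructure Φ X) : X → ModalFormula Φ → Prop
  | x, .atom p  => p ∈ M.v x
  | _, .top     => True
  | _, .bot     => False
  | x, .neg φ   => ¬ Satisfies M x φ
  | x, .and φ ψ => Satisfies M x φ ∧ Satisfies M x ψ
  | x, .or φ ψ  => Satisfies M x φ ∨ Satisfies M x ψ
  | x, .box φ   => ∀ y, M.R x y → Satisfies M y φ

/-- `B` is a bisimulation between `M` and `N`. -/
def IsBisimulation {Φ X Y : Type*} (M : KripkeStructure Φ X) (N : KripkeStructure Φ Y)
    (B : X → Y → Prop) : Prop :=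
  ∀ x y, B x y →
    M.v x = N.v y ∧
    (∀ x', M.R x x' → ∃ y', N.R y y' ∧ B x' y') ∧
    (∀ y', N.R y y' → ∃ x', M.R x x' ∧ B x' y')

/-- `x ∼ y` : there is a bisimulation relating `x` and `y`. -/
def Bisimilar {Φ X Y : Type*} (M : KripkeStructure Φ X) (N : KripkeStructure Φ Y)
    (x : X) (y : Y) : Prop :=
  ∃ B : X → Y → Prop, IsBisimulation M N B ∧ B x y

/-- `x ≈ y` : logical equivalence. -/
def LogEquiv {Φ X Y : Type*} (M : KripkeStructure Φ X) (N : KripkeStructure Φ Y)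
    (x : X) (y : Y) : Prop :=
  ∀ φ : ModalFormula Φ, Satisfies M x φ ↔ Satisfies N y φ

/-- A Kripke homomorphism: a map whose graph is a bisimulation. -/
def IsKripkeHom {Φ X Y : Type*} (M : KripkeStructure Φ X) (N : KripkeStructure Φ Y)
    (f : X → Y) : Prop :=
  IsBisimulation M N (fun x y => y = f x)

/-- `x` is m-saturated: whenever every finite subset of `S` is satisfied at some
successor of `x`, some successor of `x` satisfies all of `S`. -/
def MSaturated {Φ X : Type*} (M : KripkeStructure Φ X) (x : X) : Prop :=
  ∀ S : Set (ModalFormula Φ),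
    (∀ S₀ ⊆ S, S₀.Finite → ∃ y, M.R x y ∧ ∀ φ ∈ S₀, Satisfies M y φ) →
    ∃ y, M.R x y ∧ ∀ φ ∈ S, Satisfies M y φ

/-- A Kripke structure is saturated if every state is m-saturated. -/
def Saturated {Φ X : Type*} (M : KripkeStructure Φ X) : Prop :=
  ∀ x : X, MSaturated M x


section HMAux

variable {Φ X Y : Type*}

theorem bisim_logEquiv {M : KripkeStructure Φ X} {N : KripkeStructure Φ Y}
    {B : X → Y → Prop} (hB : IsBisimulation M N B) :
    ∀ (φ : ModalFormula Φ) (x : X) (y : Y), B x y →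
      (Satisfies M x φ ↔ Satisfies N y φ) := by
  intro φ
  induction φ with
  | atom p => intro x y hxy; obtain ⟨hv, _, _⟩ := hB x y hxy
              simp [Satisfies, hv]
  | top => intro x y _; simp [Satisfies]
  | bot => intro x y _; simp [Satisfies]
  | neg φ ih => intro x y hxy; simpa [Satisfies] using not_congr (ih x y hxy)
  | and φ ψ ihφ ihψ => intro x y hxy
                       simp [Satisfies, ihφ x y hxy, ihψ x y hxy]
  | or φ ψ ihφ ihψ => intro x y hxy
                      simp [Satisfies, ihφ x y hxy, ihψ x y hxy]
  | box φ ih =>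
      intro x y hxy
      obtain ⟨_, hforth, hback⟩ := hB x y hxy
      constructor
      · intro h y' hy'
        obtain ⟨x', hx', hB'⟩ := hback y' hy'
        exact (ih x' y' hB').mp (h x' hx')
      · intro h x' hx'
        obtain ⟨y', hy', hB'⟩ := hforth x' hx'
        exact (ih x' y' hB').mpr (h y' hy')

theorem logEquiv_symm {M : KripkeStructure Φ X} {N : KripkeStructure Φ Y}
    {x : X} {y : Y} (h : LogEquiv M N x y) : LogEquiv N M y x :=
  fun φ => (h φ).symm

theorem exists_distinguishing {M : KripkeStructure Φ X} {N : KripkeStructure Φ Y}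
    {x : X} {y : Y} (h : ¬ LogEquiv M N x y) :
    ∃ φ : ModalFormula Φ, Satisfies M x φ ∧ ¬ Satisfies N y φ := by
  rw [LogEquiv, not_forall] at h
  obtain ⟨φ, hφ⟩ := h
  by_cases hx : Satisfies M x φ
  · exact ⟨φ, hx, fun hy => hφ ⟨fun _ => hy, fun _ => hx⟩⟩
  · have hy : Satisfies N y φ := by
      by_contra hy
      exact hφ ⟨fun h' => absurd h' hx, fun h' => absurd h' hy⟩
    exact ⟨.neg φ, hx, by simp [Satisfies, hy]⟩

/-- Finite conjunction. -/
def conjL : List (ModalFormula Φ) → ModalFormula Φ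
  | [] => .top
  | φ :: l => .and φ (conjL l)

theorem satisfies_conjL {M : KripkeStructure Φ X} {x : X} :
    ∀ l : List (ModalFormula Φ),
      Satisfies M x (conjL l) ↔ ∀ φ ∈ l, Satisfies M x φ := by
  intro l
  induction l with
  | nil => simp [conjL, Satisfies]
  | cons φ l ih => simp [conjL, Satisfies, ih]

/-- Key step: under image-finiteness of the target, logical equivalence
transfers along a transition. -/
theorem logEquiv_forth {M : KripkeStructure Φ X} {N : KripkeStructure Φ Y}
    (hN : ∀ y : Y, {y' | N.R y y'}.Finite)
    {x : X} {y : Y} (h : LogEquiv M N x y) {x' : X} (hx' : M.R x x') :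
    ∃ y', N.R y y' ∧ LogEquiv M N x' y' := by
  by_contra hcon
  push_neg at hcon
  classical
  have hfin := hN y
  -- for each successor y' of y, pick a distinguishing formula
  have hch : ∀ y' : Y, ∃ φ : ModalFormula Φ,
      N.R y y' → (Satisfies M x' φ ∧ ¬ Satisfies N y' φ) := by
    intro y'
    by_cases hr : N.R y y'
    · obtain ⟨φ, h1, h2⟩ := exists_distinguishing (hcon y' hr)
      exact ⟨φ, fun _ => ⟨h1, h2⟩⟩
    · exact ⟨.top, fun hr' => absurd hr' hr⟩
  choose f hf using hch
  set L : List (ModalFormula Φ) := hfin.toFinset.toList.map f with hL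
  have hsatx' : Satisfies M x' (conjL L) := by
    rw [satisfies_conjL]
    intro φ hφ
    simp only [hL, List.mem_map] at hφ
    obtain ⟨y', hy', rfl⟩ := hφ
    rw [Finset.mem_toList, Set.Finite.mem_toFinset] at hy'
    exact (hf y' hy').1
  have hdia : Satisfies M x (ModalFormula.dia (conjL L)) := by
    simp only [ModalFormula.dia, Satisfies, not_forall]
    exact ⟨x', hx', by simp [Satisfies, hsatx']⟩
  have hdiay := (h _).mp hdia
  simp only [ModalFormula.dia, Satisfies, not_forall] at hdiay
  obtain ⟨y', hy', hsat⟩ := hdiay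
  simp only [Satisfies, not_not] at hsat
  have : Satisfies N y' (f y') := by
    rw [satisfies_conjL] at hsat
    exact hsat _ (List.mem_map.mpr ⟨y', by
      rw [Finset.mem_toList, Set.Finite.mem_toFinset]; exact hy', rfl⟩)
  exact (hf y' hy').2 this

end HMAux

/-- Hennessy–Milner: in image finite Kripke structures, bisimilarity
coincides with logical equivalence. -/
theorem hennessy_milner {Φ X₁ X₂ : Type*}
    (M₁ : KripkeStructure Φ X₁) (M₂ : KripkeStructure Φ X₂)
    (h₁ : ∀ x : X₁, {x' | M₁.R x x'}.Finite)
    (h₂ : ∀ y : X₂, {y' | M₂.R y y'}.Finite)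
    (x : X₁) (y : X₂) :
    Bisimilar M₁ M₂ x y ↔ LogEquiv M₁ M₂ x y := by
  constructor
  · rintro ⟨B, hB, hxy⟩ φ
    exact bisim_logEquiv hB φ x y hxy
  · intro h
    refine ⟨fun a b => LogEquiv M₁ M₂ a b, ?_, h⟩
    intro a b hab
    refine ⟨?_, ?_, ?_⟩
    · ext p
      simpa [Satisfies] using hab (.atom p)
    · intro x' hx'
      exact logEquiv_forth h₂ hab hx'
    · intro y' hy'
      obtain ⟨x', hx', he⟩ := logEquiv_forth h₁ (logEquiv_symm hab) hy'
      exact ⟨x', hx', logEquiv_symm he⟩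
end

section
/- Consider the Kripke structure with state set S = {s} ∪ {sᵢ | i ∈ ℕ} ∪ {s∞} (all states distinct), transition relation R = {(s, sᵢ) | i ∈ ℕ} ∪ {(s, s∞)} ∪ {(s_{i+1}, s_i) | i ∈ ℕ} ∪ {(s∞, s∞)}, and valuation v(x) = ∅ for every x ∈ S. This Kripke structure is saturated. -/
/-- The state set `{s} ∪ {sᵢ | i ∈ ℕ} ∪ {s∞}`. -/
inductive ExState where
  | s : ExState
  | si : ℕ → ExState
  | sInf : ExState

/-- The transition relation
`{(s,sᵢ) | i ∈ ℕ} ∪ {(s,s∞)} ∪ {(s_{i+1},s_i) | i ∈ ℕ} ∪ {(s∞,s∞)}`. -/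
def ExR : ExState → ExState → Prop
  | .s, .si _ => True
  | .s, .sInf => True
  | .si (i + 1), .si j => j = i
  | .sInf, .sInf => True
  | _, _ => False

/-- The example Kripke structure, with empty valuation everywhere. -/
def ExModel (Φ : Type*) : KripkeStructure Φ ExState where
  R := ExR
  v := fun _ => (∅ : Set Φ)


/-- Modal depth. -/
def ModalFormula.depth {Φ : Type*} : ModalFormula Φ → ℕ
  | .atom _ => 0
  | .top => 0
  | .bot => 0
  | .neg φ => φ.depth
  | .and φ ψ => max φ.depth ψ.depth
  | .or φ ψ => max φ.depth ψ.depth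
  | .box φ => φ.depth + 1

lemma succ_si {k : ℕ} {y : ExState} : ExR (.si (k+1)) y ↔ y = .si k := by
  cases y <;> simp [ExR]

lemma succ_inf {y : ExState} : ExR .sInf y ↔ y = .sInf := by
  cases y <;> simp [ExR]

lemma succ_s0 {y : ExState} : ¬ ExR (.si 0) y := by
  cases y <;> simp [ExR]

lemma key {Φ : Type*} (φ : ModalFormula Φ) : ∀ i, φ.depth ≤ i →
    (Satisfies (ExModel Φ) (.si i) φ ↔ Satisfies (ExModel Φ) .sInf φ) := by
  induction φ with
  | atom p => intro i _; simp [Satisfies, ExModel]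
  | top => intro i _; simp [Satisfies]
  | bot => intro i _; simp [Satisfies]
  | neg φ ih => intro i h; simp only [Satisfies]; rw [ih i h]
  | and φ ψ ih1 ih2 =>
    intro i h; simp only [ModalFormula.depth, max_le_iff] at h
    simp only [Satisfies]; rw [ih1 i h.1, ih2 i h.2]
  | or φ ψ ih1 ih2 =>
    intro i h; simp only [ModalFormula.depth, max_le_iff] at h
    simp only [Satisfies]; rw [ih1 i h.1, ih2 i h.2]
  | box φ ih =>
    intro i h
    simp only [ModalFormula.depth] at h
    obtain ⟨k, rfl⟩ : ∃ k, i = k + 1 := ⟨i - 1, by omega⟩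
    have hk : φ.depth ≤ k := by omega
    simp only [Satisfies]
    constructor
    · intro H y hy
      have hy' : y = ExState.sInf := succ_inf.mp hy
      subst hy'
      exact (ih k hk).mp (H (.si k) (rfl : k = k))
    · intro H y hy
      have hy' : y = ExState.si k := succ_si.mp hy
      subst hy'
      exact (ih k hk).mpr (H .sInf trivial)

/-- The Kripke structure of Example 2 (with the point `s∞` at infinity)
is saturated. -/
theorem exModel_saturated (Φ : Type*) : Saturated (ExModel Φ) := by
  intro x
  cases x with
  | si k =>
    cases k with
    | zero =>
      intro S h
      obtain ⟨y, hy, -⟩ := h ∅ (Set.empty_subset _) Set.finite_empty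
      exact absurd hy (succ_s0 (y := y))
    | succ k =>
      intro S h
      refine ⟨.si k, (rfl : k = k), fun φ hφ => ?_⟩
      obtain ⟨y, hy, hsat⟩ := h {φ} (Set.singleton_subset_iff.mpr hφ) (Set.finite_singleton _)
      have := succ_si.mp hy
      subst this
      exact hsat φ rfl
  | sInf =>
    intro S h
    refine ⟨.sInf, trivial, fun φ hφ => ?_⟩
    obtain ⟨y, hy, hsat⟩ := h {φ} (Set.singleton_subset_iff.mpr hφ) (Set.finite_singleton _)
    have := succ_inf.mp hy
    subst this
    exact hsat φ rfl
  | s =>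
    intro S h
    by_cases hinf : ∀ φ ∈ S, Satisfies (ExModel Φ) .sInf φ
    · exact ⟨.sInf, trivial, hinf⟩
    push_neg at hinf
    obtain ⟨φ₀, hφ₀S, hφ₀⟩ := hinf
    by_cases hex : ∃ i < φ₀.depth, ∀ φ ∈ S, Satisfies (ExModel Φ) (.si i) φ
    · obtain ⟨i, _, hi⟩ := hex
      exact ⟨.si i, trivial, hi⟩
    exfalso
    push_neg at hex
    choose ψ hψS hψ using hex
    set S₀ : Set (ModalFormula Φ) :=
      insert φ₀ ((fun i : Fin φ₀.depth => ψ i i.2) '' Set.univ) with hS₀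
    have hsub : S₀ ⊆ S := by
      intro χ hχ
      rcases hχ with rfl | ⟨i, -, rfl⟩
      · exact hφ₀S
      · exact hψS i i.2
    have hfin : S₀.Finite :=
      Set.Finite.insert _ ((Set.finite_univ).image _)
    obtain ⟨y, hy, hsat⟩ := h S₀ hsub hfin
    have hyφ₀ : Satisfies (ExModel Φ) y φ₀ := hsat φ₀ (Set.mem_insert _ _)
    cases y with
    | s => exact hy
    | sInf => exact hφ₀ hyφ₀
    | si i =>
      by_cases hid : i < φ₀.depth
      · exact hψ i hid (hsat _ (Set.mem_insert_of_mem _ ⟨⟨i, hid⟩, Set.mem_univ _, rfl⟩))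
      · exact hφ₀ ((key φ₀ i (by omega)).mp hyφ₀)
end

section
/- (Visser's generalized Hennessy–Milner theorem) Let X₁ and X₂ be saturated Kripke structures. Then for all x ∈ X₁ and y ∈ X₂: x ∼ y if and only if x ≈ y (x and y are bisimilar iff they are logically equivalent). -/
lemma bisim_imp_logequiv {Φ X Y : Type*} {M : KripkeStructure Φ X}
    {N : KripkeStructure Φ Y} {B : X → Y → Prop} (hB : IsBisimulation M N B) :
    ∀ (φ : ModalFormula Φ) (x : X) (y : Y), B x y →
      (Satisfies M x φ ↔ Satisfies N y φ) := by
  intro φ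
  induction φ with
  | atom p =>
    intro x y hxy
    have := (hB x y hxy).1
    simp [Satisfies, this]
  | top => intro x y _; simp [Satisfies]
  | bot => intro x y _; simp [Satisfies]
  | neg φ ih => intro x y hxy; simp [Satisfies, ih x y hxy]
  | and φ ψ ihφ ihψ => intro x y hxy; simp [Satisfies, ihφ x y hxy, ihψ x y hxy]
  | or φ ψ ihφ ihψ => intro x y hxy; simp [Satisfies, ihφ x y hxy, ihψ x y hxy]
  | box φ ih =>
    intro x y hxy
    constructor
    · intro h y' hy'
      obtain ⟨x', hx', hB'⟩ := (hB x y hxy).2.2 y' hy'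
      exact (ih x' y' hB').mp (h x' hx')
    · intro h x' hx'
      obtain ⟨y', hy', hB'⟩ := (hB x y hxy).2.1 x' hx'
      exact (ih x' y' hB').mpr (h y' hy')

lemma finite_conj {Φ X Y : Type*} (M : KripkeStructure Φ X) (N : KripkeStructure Φ Y)
    (S₀ : Set (ModalFormula Φ)) (hfin : S₀.Finite) :
    ∃ ψ : ModalFormula Φ,
      (∀ z : X, Satisfies M z ψ ↔ ∀ φ ∈ S₀, Satisfies M z φ) ∧
      (∀ z : Y, Satisfies N z ψ ↔ ∀ φ ∈ S₀, Satisfies N z φ) := by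
  lift S₀ to Finset (ModalFormula Φ) using hfin
  classical
  induction S₀ using Finset.induction_on with
  | empty => exact ⟨.top, fun z => by simp [Satisfies], fun z => by simp [Satisfies]⟩
  | @insert a s _ ih =>
    obtain ⟨ψ, hψ1, hψ2⟩ := ih
    exact ⟨.and a ψ, fun z => by simp [Satisfies, hψ1 z], fun z => by simp [Satisfies, hψ2 z]⟩

/-- Visser's generalized Hennessy–Milner theorem: in saturated Kripke
structures, bisimilarity coincides with logical equivalence. -/
theorem visser_hennessy_milner {Φ X₁ X₂ : Type*}
    (M₁ : KripkeStructure Φ X₁) (M₂ : KripkeStructure Φ X₂)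
    (h₁ : Saturated M₁) (h₂ : Saturated M₂)
    (x : X₁) (y : X₂) :
    Bisimilar M₁ M₂ x y ↔ LogEquiv M₁ M₂ x y := by
  constructor
  · rintro ⟨B, hB, hxy⟩ φ
    exact bisim_imp_logequiv hB φ x y hxy
  · intro hle
    refine ⟨LogEquiv M₁ M₂, ?_, hle⟩
    intro a b hab
    refine ⟨?_, ?_, ?_⟩
    · ext p
      have := hab (.atom p)
      simpa [Satisfies] using this
    · intro a' ha'
      obtain ⟨b', hb', hall⟩ := h₂ b {φ | Satisfies M₁ a' φ} (by
        intro S₀ hsub hfin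
        obtain ⟨ψ, hψ1, hψ2⟩ := finite_conj M₁ M₂ S₀ hfin
        have haψ : Satisfies M₁ a' ψ := (hψ1 a').mpr (fun φ hφ => hsub hφ)
        have : ¬ Satisfies M₁ a (.box (.neg ψ)) := by
          intro h
          exact (h a' ha') haψ
        have hb : ¬ Satisfies M₂ b (.box (.neg ψ)) := fun h => this ((hab _).mpr h)
        simp only [Satisfies, not_forall] at hb
        obtain ⟨y', hy'⟩ := hb
        obtain ⟨hRy', hy'ψ⟩ := hy'
        simp only [Satisfies, not_not] at hy'ψ
        exact ⟨y', hRy', (hψ2 y').mp hy'ψ⟩)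
      refine ⟨b', hb', fun φ => ⟨fun h => hall φ h, fun h => ?_⟩⟩
      by_contra hna
      exact (hall (.neg φ) hna) h
    · intro b' hb'
      obtain ⟨a', ha', hall⟩ := h₁ a {φ | Satisfies M₂ b' φ} (by
        intro S₀ hsub hfin
        obtain ⟨ψ, hψ1, hψ2⟩ := finite_conj M₁ M₂ S₀ hfin
        have hbψ : Satisfies M₂ b' ψ := (hψ2 b').mpr (fun φ hφ => hsub hφ)
        have : ¬ Satisfies M₂ b (.box (.neg ψ)) := by
          intro h
          exact (h b' hb') hbψ
        have ha : ¬ Satisfies M₁ a (.box (.neg ψ)) := fun h => this ((hab _).mp h)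
        simp only [Satisfies, not_forall] at ha
        obtain ⟨x', hx'⟩ := ha
        obtain ⟨hRx', hx'ψ⟩ := hx'
        simp only [Satisfies, not_not] at hx'ψ
        exact ⟨x', hRx', (hψ1 x').mp hx'ψ⟩)
      refine ⟨a', ha', fun φ => ⟨fun h => ?_, fun h => hall φ h⟩⟩
      by_contra hnb
      exact (hall (.neg φ) hnb) h
end

section
/- If X is a saturated Kripke structure, then logical equivalence ≈ is a congruence on X: there exist a Kripke structure Y and a surjective Kripke homomorphism π : X → Y whose kernel {(x,x') | π(x) = π(x')} equals the relation ≈ on X. -/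
variable {Φ X Y : Type*}

def ModalFormula.conj (l : List (ModalFormula Φ)) : ModalFormula Φ :=
  l.foldr .and .top

theorem satisfies_conj_iff {M : KripkeStructure Φ X} {x : X} {l : List (ModalFormula Φ)} :
    Satisfies M x (.conj l) ↔ ∀ φ ∈ l, Satisfies M x φ := by
  induction l with
  | nil => simp [ModalFormula.conj, Satisfies]
  | cons φ l ih => simp [ModalFormula.conj, Satisfies, ← ih]

theorem satisfies_dia_iff {M : KripkeStructure Φ X} {x : X} {φ : ModalFormula Φ} :
    Satisfies M x φ.dia ↔ ∃ y, M.R x y ∧ Satisfies M y φ := by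
  simp [ModalFormula.dia, Satisfies]

namespace LogEquiv

variable {M : KripkeStructure Φ X} {N : KripkeStructure Φ Y}

theorem mem_v_iff {x : X} {y : Y} (h : LogEquiv M N x y) (p : Φ) : p ∈ M.v x ↔ p ∈ N.v y :=
  h (.atom p)

theorem of_forall_satisfies_imp {x : X} {y : Y}
    (h : ∀ φ, Satisfies N y φ → Satisfies M x φ) : LogEquiv M N x y := by
  refine fun φ => ⟨fun hx => ?_, h φ⟩
  by_contra hy
  exact h (.neg φ) hy hx

theorem exists_succ_of_mSaturated {x : X} {y y' : Y} (hx : MSaturated M x)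
    (h : LogEquiv M N x y) (hy : N.R y y') : ∃ x', M.R x x' ∧ LogEquiv M N x' y' := by
  have hfin : ∀ S ⊆ {φ | Satisfies N y' φ}, S.Finite →
      ∃ x', M.R x x' ∧ ∀ φ ∈ S, Satisfies M x' φ := by
    intro S hS hS_fin
    obtain ⟨s, rfl⟩ := hS_fin.exists_finset_coe
    have hy' : Satisfies N y (ModalFormula.conj s.toList).dia :=
      satisfies_dia_iff.2 ⟨y', hy, satisfies_conj_iff.2 fun φ hφ => hS (s.mem_toList.1 hφ)⟩
    obtain ⟨x', hxx', hx'⟩ := satisfies_dia_iff.1 ((h _).2 hy')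
    exact ⟨x', hxx', fun φ hφ => satisfies_conj_iff.1 hx' φ (s.mem_toList.2 hφ)⟩
  obtain ⟨x', hxx', hx'⟩ := hx _ hfin
  exact ⟨x', hxx', of_forall_satisfies_imp hx'⟩

end LogEquiv

theorem logEquiv_equivalence (M : KripkeStructure Φ X) : Equivalence (LogEquiv M M) :=
  ⟨fun _ _ => .rfl, fun h φ => (h φ).symm, fun h₁ h₂ φ => (h₁ φ).trans (h₂ φ)⟩

def KripkeStructure.logEquivSetoid (M : KripkeStructure Φ X) : Setoid X :=
  ⟨LogEquiv M M, logEquiv_equivalence M⟩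

def KripkeStructure.logEquivQuotient (M : KripkeStructure Φ X) :
    KripkeStructure Φ (Quotient M.logEquivSetoid) where
  R := Relation.Map M.R (Quotient.mk _) (Quotient.mk _)
  v := Quotient.lift M.v fun _ _ h => Set.ext (LogEquiv.mem_v_iff h)

theorem Saturated.isKripkeHom_mk {M : KripkeStructure Φ X} (hM : Saturated M) :
    IsKripkeHom M M.logEquivQuotient (Quotient.mk _) := by
  rintro x _ rfl
  refine ⟨rfl, fun x' hx' => ⟨_, ⟨x, x', hx', rfl, rfl⟩, rfl⟩, ?_⟩
  rintro _ ⟨z, z', hzz', hxz, rfl⟩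
  have hxz : LogEquiv M M x z := Quotient.exact hxz.symm
  obtain ⟨x', hxx', hx'⟩ := hxz.exists_succ_of_mSaturated (hM x) hzz'
  exact ⟨x', hxx', (Quotient.sound hx').symm⟩

/-- If `X` is saturated then logical equivalence `≈` is a congruence on `X`:
it is the kernel of a surjective Kripke homomorphism. -/
theorem logEquiv_is_congruence {Φ : Type u} {X : Type v}
    (M : KripkeStructure Φ X) (hM : Saturated M) :
    ∃ (Y : Type v) (N : KripkeStructure Φ Y) (π : X → Y),
      IsKripkeHom M N π ∧ Function.Surjective π ∧
      ∀ x x' : X, π x = π x' ↔ LogEquiv M M x x' :=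
  ⟨_, M.logEquivQuotient, Quotient.mk _, hM.isKripkeHom_mk, Quotient.mk_surjective,
    fun _ _ => Quotient.eq⟩
end

section
/- A Kripke structure (X, R, v) is saturated if and only if there exists a topology τ on X making (X, R, v, τ) a topological model. Moreover, if (X, R, v) is saturated, then the topology generated by the sets ⟦φ⟧ for all modal formulas φ is such a topology. -/
/-- A topological model: a Kripke structure together with a topology such that
all successor sets are compact, `⟨R⟩O` and `[R]O` are open for open `O`, and
`⟦p⟧` is clopen for every atomic proposition `p`. -/
structure IsTopologicalModel {Φ X : Type*} [TopologicalSpace X]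
    (M : KripkeStructure Φ X) : Prop where
  compact_succ : ∀ x : X, IsCompact {y | M.R x y}
  dia_open : ∀ O : Set X, IsOpen O → IsOpen {x | ({y | M.R x y} ∩ O).Nonempty}
  box_open : ∀ O : Set X, IsOpen O → IsOpen {x | {y | M.R x y} ⊆ O}
  atom_clopen : ∀ p : Φ, IsClopen {x | p ∈ M.v x}

namespace SatTop

variable {Φ X : Type*} (M : KripkeStructure Φ X)

/-- `⟦φ⟧`. -/
def sat (φ : ModalFormula Φ) : Set X := {x | Satisfies M x φ}

/-- The subbasis of definable sets. -/
def B : Set (Set X) := {S | ∃ φ : ModalFormula Φ, S = sat M φ}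

/-- Disjunction of a list of formulas. -/
def disj : List (ModalFormula Φ) → ModalFormula Φ
  | [] => .bot
  | φ :: l => .or φ (disj l)

lemma sat_disj (y : X) : ∀ L : List (ModalFormula Φ),
    (Satisfies M y (disj L) ↔ ∃ φ ∈ L, Satisfies M y φ)
  | [] => by simp [disj, Satisfies]
  | φ :: l => by simp [disj, Satisfies, sat_disj y l]

lemma basis :
    @TopologicalSpace.IsTopologicalBasis X (TopologicalSpace.generateFrom (B M)) (B M) := by
  letI : TopologicalSpace X := TopologicalSpace.generateFrom (B M)
  refine ⟨?_, ?_, rfl⟩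
  · rintro _ ⟨φ, rfl⟩ _ ⟨ψ, rfl⟩ x hx
    exact ⟨sat M (.and φ ψ), ⟨_, rfl⟩, hx, fun z hz => hz⟩
  · apply Set.eq_univ_of_univ_subset
    intro x _
    exact ⟨sat M .top, ⟨.top, rfl⟩, trivial⟩

lemma satModel (hM : Saturated M) :
    @IsTopologicalModel Φ X (TopologicalSpace.generateFrom (B M)) M := by
  letI τ : TopologicalSpace X := TopologicalSpace.generateFrom (B M)
  have hb : TopologicalSpace.IsTopologicalBasis (B M) := basis M
  have hBopen : ∀ φ : ModalFormula Φ, IsOpen (sat M φ) := fun φ =>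
    TopologicalSpace.GenerateOpen.basic _ ⟨φ, rfl⟩
  have hcomp : ∀ x : X, IsCompact {y | M.R x y} := by
    intro x
    apply isCompact_of_finite_subcover
    intro ι U hUo hcov
    by_contra hfin
    push_neg at hfin
    set S : Set (ModalFormula Φ) :=
      {ψ | ∃ φ : ModalFormula Φ, ψ = .neg φ ∧ ∃ i, sat M φ ⊆ U i} with hS
    have hfinsat : ∀ S₀ ⊆ S, S₀.Finite →
        ∃ y, M.R x y ∧ ∀ φ ∈ S₀, Satisfies M y φ := by
      intro S₀ hS₀ hfin₀
      by_contra hno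
      push_neg at hno
      have hsel : ∀ ψ ∈ S₀, ∃ φ : ModalFormula Φ, ψ = .neg φ ∧ ∃ i, sat M φ ⊆ U i :=
        fun ψ hψ => hS₀ hψ
      choose f hf idx hidx using hsel
      classical
      set F := hfin₀.toFinset with hF
      have hmemF : ∀ ψ, ψ ∈ F ↔ ψ ∈ S₀ := fun ψ => hfin₀.mem_toFinset
      set t : Finset ι :=
        F.attach.image (fun ψh => idx ψh.1 ((hmemF ψh.1).mp ψh.2)) with ht
      apply hfin t
      intro y hyR
      obtain ⟨ψ, hψ, hns⟩ := hno y hyR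
      have hyφ : Satisfies M y (f ψ hψ) := by
        by_contra hc
        exact hns (by rw [hf ψ hψ]; exact hc)
      have hmem : idx ψ hψ ∈ t := by
        rw [ht]
        exact Finset.mem_image.mpr ⟨⟨ψ, (hmemF ψ).mpr hψ⟩, Finset.mem_attach _ _, rfl⟩
      exact Set.mem_biUnion hmem (hidx ψ hψ hyφ)
    obtain ⟨y, hyR, hall⟩ := hM x S hfinsat
    obtain ⟨i, hi⟩ := Set.mem_iUnion.mp (hcov hyR)
    obtain ⟨b, ⟨φ, rfl⟩, hyb, hbU⟩ := hb.exists_subset_of_mem_open hi (hUo i)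
    exact hall (.neg φ) ⟨φ, rfl, i, hbU⟩ hyb
  refine ⟨hcomp, ?_, ?_, ?_⟩
  · intro O hO
    rw [hb.isOpen_iff]
    rintro x ⟨y, hyR, hyO⟩
    obtain ⟨b, ⟨φ, rfl⟩, hyb, hbO⟩ := hb.exists_subset_of_mem_open hyO hO
    refine ⟨sat M φ.dia, ⟨φ.dia, rfl⟩, ?_, ?_⟩
    · intro h
      exact h y hyR hyb
    · intro x' hx'
      have hx'' : ¬ ∀ y, M.R x' y → ¬ Satisfies M y φ := hx'
      push_neg at hx''
      obtain ⟨y', hR', hy'⟩ := hx''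
      exact ⟨y', hR', hbO hy'⟩
  · intro O hO
    rw [hb.isOpen_iff]
    intro x hx
    have hcov : {y | M.R x y} ⊆
        ⋃ φ' : {φ : ModalFormula Φ // sat M φ ⊆ O}, sat M φ'.1 := by
      intro y hy
      obtain ⟨b, ⟨φ, rfl⟩, hyb, hbO⟩ := hb.exists_subset_of_mem_open (hx hy) hO
      exact Set.mem_iUnion.mpr ⟨⟨φ, hbO⟩, hyb⟩
    obtain ⟨t, ht⟩ := (hcomp x).elim_finite_subcover
      (fun φ' : {φ : ModalFormula Φ // sat M φ ⊆ O} => sat M φ'.1) (fun φ' => hBopen φ'.1) hcov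
    set L : List (ModalFormula Φ) := t.toList.map Subtype.val with hL
    refine ⟨sat M (.box (disj L)), ⟨_, rfl⟩, ?_, ?_⟩
    · intro y hy
      obtain ⟨φ', hφt, hyφ⟩ := Set.mem_iUnion₂.mp (ht hy)
      refine (sat_disj M y L).mpr ⟨φ'.1, ?_, hyφ⟩
      rw [hL]
      exact List.mem_map.mpr ⟨φ', Finset.mem_toList.mpr hφt, rfl⟩
    · intro x' hx' y hy
      have := (sat_disj M y L).mp (hx' y hy)
      obtain ⟨φ, hφL, hyφ⟩ := this
      rw [hL] at hφL
      obtain ⟨φ', _, rfl⟩ := List.mem_map.mp hφL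
      exact φ'.2 hyφ
  · intro p
    have h1 : {x | p ∈ M.v x} = sat M (.atom p) := rfl
    have h2 : {x | p ∈ M.v x}ᶜ = sat M (.neg (.atom p)) := rfl
    constructor
    · rw [← isOpen_compl_iff, h2]; exact hBopen _
    · rw [h1]; exact hBopen _

lemma modelSat {τ : TopologicalSpace X} (h : IsTopologicalModel M) : Saturated M := by
  have hclopen : ∀ φ : ModalFormula Φ, IsClopen (sat M φ) := by
    intro φ
    induction φ with
    | atom p => exact h.atom_clopen p
    | top =>
      have : sat M (.top : ModalFormula Φ) = Set.univ := by
        ext x; simp [sat, Satisfies]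
      rw [this]; exact isClopen_univ
    | bot =>
      have : sat M (.bot : ModalFormula Φ) = ∅ := by
        ext x; simp [sat, Satisfies]
      rw [this]; exact isClopen_empty
    | neg φ ih =>
      have : sat M (.neg φ) = (sat M φ)ᶜ := rfl
      rw [this]; exact ih.compl
    | and φ ψ ih1 ih2 =>
      have : sat M (.and φ ψ) = sat M φ ∩ sat M ψ := rfl
      rw [this]; exact ih1.inter ih2
    | or φ ψ ih1 ih2 =>
      have : sat M (.or φ ψ) = sat M φ ∪ sat M ψ := rfl
      rw [this]; exact ih1.union ih2
    | box φ ih =>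
      have hbox : sat M (.box φ) = {x | {y | M.R x y} ⊆ sat M φ} := rfl
      constructor
      · rw [← isOpen_compl_iff]
        have : (sat M (.box φ))ᶜ = {x | ({y | M.R x y} ∩ (sat M φ)ᶜ).Nonempty} := by
          ext x
          constructor
          · intro hx
            have hx' : ¬ {y | M.R x y} ⊆ sat M φ := hx
            obtain ⟨y, hy1, hy2⟩ := Set.not_subset.mp hx'
            exact ⟨y, hy1, hy2⟩
          · rintro ⟨y, hy1, hy2⟩ hx
            exact hy2 (hx y hy1)
        rw [this]
        exact h.dia_open _ ih.compl.isOpen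
      · rw [hbox]; exact h.box_open _ ih.isOpen
  intro x S hfs
  have hfip := (h.compact_succ x).inter_iInter_nonempty (fun ψ : S => sat M ψ.1)
    (fun ψ => (hclopen ψ.1).isClosed) ?_
  · obtain ⟨y, hyR, hy⟩ := hfip
    refine ⟨y, hyR, fun φ hφ => ?_⟩
    exact Set.mem_iInter.mp hy ⟨φ, hφ⟩
  · intro u
    obtain ⟨y, hyR, hy⟩ := hfs (Subtype.val '' (u : Set S))
      (by rintro _ ⟨ψ, _, rfl⟩; exact ψ.2) ((u.finite_toSet).image _)
    refine ⟨y, hyR, ?_⟩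
    rw [Set.mem_iInter₂]
    intro ψ hψ
    exact hy ψ.1 ⟨ψ, hψ, rfl⟩

end SatTop

/-- A Kripke structure is saturated iff it carries a topology making it a
topological model; moreover, for a saturated structure the topology generated
by the sets `⟦φ⟧` is such a topology. -/
theorem saturated_iff_topologicalModel {Φ X : Type*} (M : KripkeStructure Φ X) :
    (Saturated M ↔ ∃ τ : TopologicalSpace X, @IsTopologicalModel Φ X τ M) ∧
    (Saturated M →
      @IsTopologicalModel Φ X
        (TopologicalSpace.generateFrom
          {S | ∃ φ : ModalFormula Φ, S = {x | Satisfies M x φ}}) M) := by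
  constructor
  · constructor
    · intro h
      exact ⟨_, SatTop.satModel M h⟩
    · rintro ⟨τ, h⟩
      exact SatTop.modelSat M h
  · exact SatTop.satModel M
end

section
/- Let X be a topological space, κ : I → 𝕍(X) a net converging to K in the Vietoris space 𝕍(X), and b : I → X a net with bᵢ ∈ κᵢ for every i ∈ I. Then there exists x ∈ K which is a cluster point of the net b, i.e. for every open neighborhood U of x and every i ∈ I there exists j ≥ i with b_j ∈ U (in Lean: MapClusterPt x Filter.atTop b); equivalently, some subnet of b converges to x. -/
/-- The (compact) Vietoris space over `X`: the compact subsets of `X`. -/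
def Vietoris (X : Type*) [TopologicalSpace X] : Type _ :=
  {K : Set X // IsCompact K}

/-- The Vietoris topology, generated by the subbase of all sets
`⟨O⟩ = {K | K ∩ O ≠ ∅}` and `[O] = {K | K ⊆ O}` for `O` open. -/
instance Vietoris.topologicalSpace (X : Type*) [TopologicalSpace X] :
    TopologicalSpace (Vietoris X) :=
  TopologicalSpace.generateFrom
    ({S | ∃ O : Set X, IsOpen O ∧ S = {K : Vietoris X | (K.1 ∩ O).Nonempty}} ∪
     {S | ∃ O : Set X, IsOpen O ∧ S = {K : Vietoris X | K.1 ⊆ O}})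

open Filter Topology

theorem IsCompact.exists_clusterPt_of_le_nhdsSet {X : Type*} [TopologicalSpace X] {s : Set X}
    (hs : IsCompact s) {l : Filter X} [NeBot l] (hl : l ≤ 𝓝ˢ s) : ∃ x ∈ s, ClusterPt x l := by
  by_contra! hno
  have hdisj : Disjoint (𝓝ˢ s) l :=
    hs.disjoint_nhdsSet_left.2 fun x hx => disjoint_iff.2 (not_neBot.1 (hno x hx))
  exact NeBot.ne ‹_› (hdisj.eq_bot_of_ge hl)

theorem IsCompact.exists_mapClusterPt_of_tendsto_nhdsSet {X ι : Type*} [TopologicalSpace X]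
    {s : Set X} (hs : IsCompact s) {l : Filter ι} [NeBot l] {f : ι → X}
    (hf : Tendsto f l (𝓝ˢ s)) : ∃ x ∈ s, MapClusterPt x l f :=
  hs.exists_clusterPt_of_le_nhdsSet hf

namespace Vietoris

variable {X : Type*} [TopologicalSpace X]

theorem isOpen_setOf_subset {O : Set X} (hO : IsOpen O) :
    IsOpen {K : Vietoris X | K.1 ⊆ O} :=
  TopologicalSpace.isOpen_generateFrom_of_mem (Or.inr ⟨O, hO, rfl⟩)

theorem tendsto_nhdsSet_of_tendsto {ι : Type*} {l : Filter ι} {κ : ι → Vietoris X}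
    {K : Vietoris X} (hκ : Tendsto κ l (𝓝 K)) {b : ι → X} (hb : ∀ i, b i ∈ (κ i).1) :
    Tendsto b l (𝓝ˢ K.1) := by
  refine (hasBasis_nhdsSet K.1).tendsto_right_iff.2 fun O ⟨hO, hKO⟩ => ?_
  filter_upwards [hκ ((isOpen_setOf_subset hO).mem_nhds hKO)] with i hi
  exact hi (hb i)

end Vietoris

/-- If `κᵢ → K` in the Vietoris space and `bᵢ ∈ κᵢ` for all `i`, then the net
`b` has a cluster point in `K` (equivalently, a subnet of `b` converges to a
point of `K`). -/
theorem vietoris_clusterPt {X : Type u} [TopologicalSpace X]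
    {I : Type w} [PartialOrder I] [IsDirected I (· ≤ ·)] [Nonempty I]
    (κ : I → Vietoris X) (K : Vietoris X)
    (hκ : Filter.Tendsto κ Filter.atTop (nhds K))
    (b : I → X) (hb : ∀ i, b i ∈ (κ i).1) :
    ∃ x ∈ K.1, MapClusterPt x Filter.atTop b :=
  K.2.exists_mapClusterPt_of_tendsto_nhdsSet (Vietoris.tendsto_nhdsSet_of_tendsto hκ hb)
end

section
/- Let X be a topological space, κ : I → 𝕍(X) a net converging to K in the Vietoris space 𝕍(X), and a ∈ K. Then there exist a nonempty directed partially ordered set J, a monotone map f : J → I whose image is cofinal in I, and a net a' : J → X with a'_j ∈ κ_{f(j)} for every j ∈ J, such that the net a' converges to a in X. -/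
/-- If `κᵢ → K` in the Vietoris space and `a ∈ K`, then there is a subnet
`κ ∘ f` (indexed by a nonempty directed poset `J`, with `f` monotone and
cofinal) and elements `a'_j ∈ κ_{f j}` converging to `a`. -/
theorem vietoris_subnet_elements_converge {X : Type u} [TopologicalSpace X]
    {I : Type w} [PartialOrder I] [IsDirected I (· ≤ ·)] [Nonempty I]
    (κ : I → Vietoris X) (K : Vietoris X)
    (hκ : Filter.Tendsto κ Filter.atTop (nhds K))
    (a : X) (ha : a ∈ K.1) :
    ∃ (J : Type (max u w)) (po : PartialOrder J) (f : J → I) (a' : J → X),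
      Nonempty J ∧
      (∀ j₁ j₂ : J, ∃ j₃ : J, po.le j₁ j₃ ∧ po.le j₂ j₃) ∧
      (∀ j₁ j₂ : J, po.le j₁ j₂ → f j₁ ≤ f j₂) ∧
      (∀ i : I, ∃ j : J, i ≤ f j) ∧
      (∀ j : J, a' j ∈ (κ (f j)).1) ∧
      Filter.Tendsto a' (@Filter.atTop J po.toPreorder) (nhds a) := by

  classical
  have key : ∀ U : Set X, IsOpen U → a ∈ U →
      ∃ i₀ : I, ∀ i ≥ i₀, ((κ i).1 ∩ U).Nonempty := by
    intro U hU haU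
    have hopen : IsOpen {L : Vietoris X | (L.1 ∩ U).Nonempty} :=
      TopologicalSpace.isOpen_generateFrom_of_mem (Or.inl ⟨U, hU, rfl⟩)
    have hmem : K ∈ {L : Vietoris X | (L.1 ∩ U).Nonempty} := ⟨a, ha, haU⟩
    have h2 : ∀ᶠ i in Filter.atTop, ((κ i).1 ∩ U).Nonempty := hκ (hopen.mem_nhds hmem)
    exact Filter.eventually_atTop.mp h2
  let J := {p : I × Set X // IsOpen p.2 ∧ a ∈ p.2 ∧ ((κ p.1).1 ∩ p.2).Nonempty}
  letI po : PartialOrder J :=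
    { le := fun p q => p.1.1 ≤ q.1.1 ∧ q.1.2 ⊆ p.1.2
      lt := fun p q => (p.1.1 ≤ q.1.1 ∧ q.1.2 ⊆ p.1.2) ∧ ¬(q.1.1 ≤ p.1.1 ∧ p.1.2 ⊆ q.1.2)
      lt_iff_le_not_ge := fun _ _ => Iff.rfl
      le_refl := fun p => ⟨le_refl _, subset_rfl⟩
      le_trans := fun p q r h1 h2 => ⟨h1.1.trans h2.1, h2.2.trans h1.2⟩
      le_antisymm := fun p q h1 h2 =>
        Subtype.ext (Prod.ext (le_antisymm h1.1 h2.1) (subset_antisymm h2.2 h1.2)) }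
  refine ⟨J, po, fun p => p.1.1, fun p => p.2.2.2.choose, ?_, ?_, ?_, ?_, ?_, ?_⟩
  · obtain ⟨i₀, hi₀⟩ := key Set.univ isOpen_univ (Set.mem_univ a)
    exact ⟨⟨(i₀, Set.univ), isOpen_univ, Set.mem_univ a, hi₀ i₀ le_rfl⟩⟩
  · rintro ⟨⟨i₁, U₁⟩, hU₁, ha₁, hne₁⟩ ⟨⟨i₂, U₂⟩, hU₂, ha₂, hne₂⟩
    obtain ⟨i₀, hi₀⟩ := key (U₁ ∩ U₂) (hU₁.inter hU₂) ⟨ha₁, ha₂⟩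
    obtain ⟨m, hm₁, hm₂⟩ := directed_of (· ≤ ·) i₁ i₂
    obtain ⟨n, hn₁, hn₂⟩ := directed_of (· ≤ ·) m i₀
    exact ⟨⟨(n, U₁ ∩ U₂), hU₁.inter hU₂, ⟨ha₁, ha₂⟩, hi₀ n hn₂⟩,
      ⟨hm₁.trans hn₁, Set.inter_subset_left⟩, ⟨hm₂.trans hn₁, Set.inter_subset_right⟩⟩
  · rintro p q h; exact h.1
  · intro i
    obtain ⟨i₀, hi₀⟩ := key Set.univ isOpen_univ (Set.mem_univ a)
    obtain ⟨n, hn₁, hn₂⟩ := directed_of (· ≤ ·) i i₀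
    exact ⟨⟨(n, Set.univ), isOpen_univ, Set.mem_univ a, hi₀ n hn₂⟩, hn₁⟩
  · intro p; exact p.2.2.2.choose_spec.1
  · intro s hs
    obtain ⟨U, hUs, hU, haU⟩ := mem_nhds_iff.mp hs
    obtain ⟨i₀, hi₀⟩ := key U hU haU
    have hj₀ : IsOpen ((i₀, U) : I × Set X).2 ∧ a ∈ ((i₀, U) : I × Set X).2 ∧
        ((κ ((i₀, U) : I × Set X).1).1 ∩ ((i₀, U) : I × Set X).2).Nonempty :=
      ⟨hU, haU, hi₀ i₀ le_rfl⟩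
    have hmem : {j : J | po.le (⟨(i₀, U), hj₀⟩ : J) j} ∈ @Filter.atTop J po.toPreorder :=
      @Filter.mem_atTop J po.toPreorder _
    rw [Filter.mem_map]
    refine Filter.mem_of_superset hmem ?_
    rintro ⟨⟨i, V⟩, hV, haV, hne⟩ hle
    exact hUs (hle.2 hne.choose_spec.2)
end

section
/- Let (X, R, v, τ) be a topological model and U ⊆ X a Kripke substructure, i.e. R(u) ⊆ U for every u ∈ U. Then the topological closure of U is also a Kripke substructure: R(u) ⊆ closure(U) for every u ∈ closure(U). -/
/-- In a topological model, the closure of a Kripke substructure is again a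
Kripke substructure. -/
theorem closure_substructure {Φ X : Type*} [TopologicalSpace X]
    (M : KripkeStructure Φ X) (hM : IsTopologicalModel M)
    (U : Set X) (hU : ∀ u ∈ U, {y | M.R u y} ⊆ U) :
    ∀ u ∈ closure U, {y | M.R u y} ⊆ closure U := by
  intro u hu y hy
  rw [mem_closure_iff] at hu ⊢
  intro O hO hyO
  have h := hu _ (hM.dia_open O hO) ⟨y, hy, hyO⟩
  obtain ⟨u', ⟨z, hz, hzO⟩, hu'U⟩ := h
  exact ⟨z, hzO, hU u' hu'U hz⟩
end

section
/- Let (A, R_A, v_A, τ_A) and (B, R_B, v_B, τ_B) be topological models and let S ⊆ A × B be a bisimulation between the underlying Kripke structures. Then the topological closure of S in the product topology on A × B is again a bisimulation between the underlying Kripke structures. -/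
/-- The closure (in the product topology) of a bisimulation between two
topological models is again a bisimulation. -/
theorem closure_bisimulation {Φ A B : Type*} [TopologicalSpace A] [TopologicalSpace B]
    (M : KripkeStructure Φ A) (N : KripkeStructure Φ B)
    (hM : IsTopologicalModel M) (hN : IsTopologicalModel N)
    (S : Set (A × B)) (hS : IsBisimulation M N (fun a b => (a, b) ∈ S)) :
    IsBisimulation M N (fun a b => (a, b) ∈ closure S) := by
  intro a b hab
  have hopen : IsOpen ((closure S)ᶜ) := isClosed_closure.isOpen_compl
  refine ⟨?_, ?_, ?_⟩
  · -- valuations agree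
    ext p
    have hA1 : IsClopen {q : A × B | p ∈ M.v q.1} :=
      (hM.atom_clopen p).preimage continuous_fst
    have hB1 : IsClopen {q : A × B | p ∈ N.v q.2} :=
      (hN.atom_clopen p).preimage continuous_snd
    have hcl : IsClosed {q : A × B | p ∈ M.v q.1 ↔ p ∈ N.v q.2} := by
      have heq : {q : A × B | p ∈ M.v q.1 ↔ p ∈ N.v q.2}
          = ({q : A × B | p ∈ M.v q.1} ∩ {q | p ∈ N.v q.2}) ∪
            ({q : A × B | p ∈ M.v q.1}ᶜ ∩ {q | p ∈ N.v q.2}ᶜ) := by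
        ext q; simp only [Set.mem_setOf_eq, Set.mem_union, Set.mem_inter_iff,
          Set.mem_compl_iff]; tauto
      rw [heq]
      exact (hA1.isClosed.inter hB1.isClosed).union
        (hA1.compl.isClosed.inter hB1.compl.isClosed)
    have hsub : S ⊆ {q : A × B | p ∈ M.v q.1 ↔ p ∈ N.v q.2} := by
      rintro ⟨x, y⟩ hxy
      have := (hS x y hxy).1
      simp only [Set.mem_setOf_eq, this]
    have := (closure_minimal hsub hcl) hab
    exact this
  · -- forth
    intro a' ha'
    by_contra hcon
    push_neg at hcon
    have key : ∀ y' : B, ∃ u w, IsOpen u ∧ IsOpen w ∧ a' ∈ u ∧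
        (N.R b y' → y' ∈ w) ∧ u ×ˢ w ⊆ (closure S)ᶜ := by
      intro y'
      by_cases h : N.R b y'
      · obtain ⟨u, w, h1, h2, h3, h4, h5⟩ := isOpen_prod_iff.mp hopen a' y' (hcon y' h)
        exact ⟨u, w, h1, h2, h3, fun _ => h4, h5⟩
      · exact ⟨Set.univ, ∅, isOpen_univ, isOpen_empty, trivial,
          fun hh => absurd hh h, by simp⟩
    choose u w hu hw hau hyw hsub using key
    obtain ⟨t, _, hcov⟩ := (hN.compact_succ b).elim_nhds_subcover w
      (fun y hy => (hw y).mem_nhds (hyw y hy))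
    set U := ⋂ y ∈ t, u y with hU
    set V := ⋃ y ∈ t, w y with hV
    have hUopen : IsOpen U := isOpen_biInter_finset (fun y _ => hu y)
    have haU : a' ∈ U := Set.mem_biInter (fun y _ => hau y)
    have h1 : IsOpen {x | ({y | M.R x y} ∩ U).Nonempty} := hM.dia_open U hUopen
    have h2 : IsOpen {x | {y | N.R x y} ⊆ V} :=
      hN.box_open V (isOpen_biUnion (fun y _ => hw y))
    have hmem : (a, b) ∈ {x | ({y | M.R x y} ∩ U).Nonempty} ×ˢ {x | {y | N.R x y} ⊆ V} :=
      ⟨⟨a', ha', haU⟩, hcov⟩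
    obtain ⟨⟨x, y⟩, ⟨⟨x', hxx', hx'U⟩, hyV⟩, hxyS⟩ :=
      mem_closure_iff.mp hab _ (h1.prod h2) hmem
    obtain ⟨_, hforth, _⟩ := hS x y hxyS
    obtain ⟨y', hyy', hx'y'⟩ := hforth x' hxx'
    have hy'V : y' ∈ V := hyV hyy'
    obtain ⟨z, hz, hy'wz⟩ := Set.mem_iUnion₂.mp hy'V
    exact hsub z ⟨Set.mem_iInter₂.mp hx'U z hz, hy'wz⟩ (subset_closure hx'y')
  · -- back
    intro b' hb'
    by_contra hcon
    push_neg at hcon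
    have key : ∀ x' : A, ∃ u w, IsOpen u ∧ IsOpen w ∧ (M.R a x' → x' ∈ u) ∧
        b' ∈ w ∧ u ×ˢ w ⊆ (closure S)ᶜ := by
      intro x'
      by_cases h : M.R a x'
      · obtain ⟨u, w, h1, h2, h3, h4, h5⟩ := isOpen_prod_iff.mp hopen x' b' (hcon x' h)
        exact ⟨u, w, h1, h2, fun _ => h3, h4, h5⟩
      · exact ⟨∅, Set.univ, isOpen_empty, isOpen_univ,
          fun hh => absurd hh h, trivial, by simp⟩
    choose u w hu hw hxu hbw hsub using key
    obtain ⟨t, _, hcov⟩ := (hM.compact_succ a).elim_nhds_subcover u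
      (fun x hx => (hu x).mem_nhds (hxu x hx))
    set U := ⋃ x ∈ t, u x with hU
    set W := ⋂ x ∈ t, w x with hW
    have hWopen : IsOpen W := isOpen_biInter_finset (fun x _ => hw x)
    have hbW : b' ∈ W := Set.mem_biInter (fun x _ => hbw x)
    have h1 : IsOpen {x | {y | M.R x y} ⊆ U} :=
      hM.box_open U (isOpen_biUnion (fun x _ => hu x))
    have h2 : IsOpen {y | ({z | N.R y z} ∩ W).Nonempty} := hN.dia_open W hWopen
    have hmem : (a, b) ∈ {x | {y | M.R x y} ⊆ U} ×ˢ {y | ({z | N.R y z} ∩ W).Nonempty} :=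
      ⟨hcov, ⟨b', hb', hbW⟩⟩
    obtain ⟨⟨x, y⟩, ⟨hxU, ⟨y', hyy', hy'W⟩⟩, hxyS⟩ :=
      mem_closure_iff.mp hab _ (h1.prod h2) hmem
    obtain ⟨_, _, hback⟩ := hS x y hxyS
    obtain ⟨x', hxx', hx'y'⟩ := hback y' hyy'
    have hx'U : x' ∈ U := hxU hxx'
    obtain ⟨z, hz, hx'uz⟩ := Set.mem_iUnion₂.mp hx'U
    exact hsub z ⟨hx'uz, Set.mem_iInter₂.mp hy'W z hz⟩ (subset_closure hx'y')
end
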